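/- If M is a noncrossing perfect matching of {1,...,2n} and {i,i+1} is not a block of M, with a ∼ i and b ∼ i+1 in M, then the matching M' obtained from M by replacing {a,i} and {b,i+1} with {a,b} and {i,i+1} is again a noncrossing perfect matching. -/

import Mathlib

open MvPolynomial Finset

noncomputable section

/-- The polynomial ring ℂ[x_{ij}] for a 2 × (2n) matrix of indeterminates. -/
abbrev PolyR (n : ℕ) := MvPolynomial (Fin 2 × Fin (2 * n)) ℂ

/-- The 2×2 minor Δ_{ab} = x_{1a} x_{2b} - x_{1b} x_{2a} (rows 0,1 in 0-indexing). -/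
def Delta {n : ℕ} (a b : Fin (2 * n)) : PolyR n :=
  X (0, a) * X (1, b) - X (0, b) * X (1, a)

/-- A perfect matching on {1,…,2n}, encoded as a fixed-point-free involution. -/
structure PM (n : ℕ) where
  f : Fin (2 * n) → Fin (2 * n)
  invol : ∀ i, f (f i) = i
  nofix : ∀ i, f i ≠ i

/-- The product Δ_M of the minors over the blocks of a perfect matching M. -/
def DeltaM {n : ℕ} (M : PM n) : PolyR n :=
  ∏ i ∈ Finset.univ.filter (fun i => i < M.f i), Delta i (M.f i)

/-- M is noncrossing: no a < b < c < d with a ∼ c and b ∼ d. -/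
def Noncrossing {n : ℕ} (M : PM n) : Prop :=
  ¬ ∃ a b c d : Fin (2 * n), a < b ∧ b < c ∧ c < d ∧ M.f a = c ∧ M.f b = d

/-- The number of crossing pairs a < b < c < d with a ∼ c, b ∼ d in M. -/
def crossings {n : ℕ} (M : PM n) : ℕ :=
  ((Finset.univ : Finset (Fin (2 * n) × Fin (2 * n))).filter
    (fun p => p.1 < p.2 ∧ p.2 < M.f p.1 ∧ M.f p.1 < M.f p.2)).card

/-!
Call a chord `{x, y}` separating for `u, v` when exactly one of them lies strictly between `x`
and `y`; a matching is noncrossing iff no block separates the endpoints of another. Let `a = M i`,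
`b = M j`. The new block `{i, j}` separates nothing, as `i` and `j` are adjacent. An old block does
not separate `i` from `j` (again by adjacency), nor, as `M` is noncrossing, `i` from `a` or `j`
from `b`; hence it does not separate `a` from `b`. For disjoint chords separation is symmetric, so
`{a, b}` does not separate an old block either.
-/

section SameSide

variable {α : Type*} [LinearOrder α] {x y u v w : α}

/-- `u` and `v` lie on the same side of the chord `{x, y}`. -/
def SameSide (x y u v : α) : Prop := u ∈ Set.uIoo x y ↔ v ∈ Set.uIoo x y

theorem SameSide.symm (h : SameSide x y u v) : SameSide x y v u := Iff.symm h

theorem SameSide.trans (h₁ : SameSide x y u v) (h₂ : SameSide x y v w) : SameSide x y u w :=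
  Iff.trans h₁ h₂

theorem sameSide_swap : SameSide y x u v ↔ SameSide x y u v := by
  rw [SameSide, SameSide, Set.uIoo_comm]

theorem sameSide_endpoints : SameSide x y x y := by
  simp [SameSide]

theorem sameSide_comm (hxu : x ≠ u) (hxv : x ≠ v) (hyu : y ≠ u) (hyv : y ≠ v) :
    SameSide x y u v ↔ SameSide u v x y := by
  simp only [SameSide, Set.uIoo, Set.mem_Ioo]
  grind

theorem CovBy.chord_sameSide (h : x ⋖ y) : SameSide x y u v := by
  simp [SameSide, Set.uIoo_of_lt h.lt, h.Ioo_eq]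

theorem CovBy.sameSide (h : u ⋖ v) (hxu : x ≠ u) (hxv : x ≠ v) (hyu : y ≠ u) (hyv : y ≠ v) :
    SameSide x y u v := by
  have side : ∀ z, z ≠ u → z ≠ v → (z < u ↔ z < v) := fun z hzu hzv =>
    ⟨fun hz => hz.trans h.lt, fun hz => (h.le_of_lt hz).lt_of_ne hzu⟩
  have := side x hxu hxv
  have := side y hyu hyv
  simp only [SameSide, Set.uIoo, Set.mem_Ioo]
  grind

end SameSide

namespace PM

variable {n : ℕ} (M : PM n) {i j x y : Fin (2 * n)}

theorem f_eq_iff : M.f x = y ↔ x = M.f y :=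
  ⟨fun h => h ▸ (M.invol x).symm, fun h => h ▸ M.invol y⟩

theorem f_injective : Function.Injective M.f := fun x y h => by
  rw [← M.invol x, h, M.invol]

def conj (σ : Equiv.Perm (Fin (2 * n))) : PM n where
  f k := σ (M.f (σ.symm k))
  invol k := by simp [M.invol]
  nofix k h := M.nofix (σ.symm k) (σ.symm_apply_eq.2 h.symm).symm

theorem conj_refl : M.conj (Equiv.refl _) = M := rfl

/-- Conjugating by the transposition of `j` and `M.f i` turns the blocks `{i, M.f i}`,
`{j, M.f j}` into `{i, j}`, `{M.f i, M.f j}` and fixes all other blocks. -/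
def uncross (i j : Fin (2 * n)) : PM n := M.conj (Equiv.swap j (M.f i))

theorem uncross_f_self (hij : i ≠ j) : (M.uncross i j).f i = j := by
  simp [uncross, conj, Equiv.swap_apply_of_ne_of_ne hij (M.nofix i).symm]

theorem uncross_f_f (hij : i ≠ j) : (M.uncross i j).f (M.f i) = M.f j := by
  simp [uncross, conj, Equiv.swap_apply_of_ne_of_ne (M.nofix j) (M.f_injective.ne hij.symm)]

theorem uncross_f_of_ne {k : Fin (2 * n)} (hki : k ≠ i) (hkj : k ≠ j) (hka : k ≠ M.f i)
    (hkb : k ≠ M.f j) : (M.uncross i j).f k = M.f k := by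
  simp [uncross, conj, Equiv.swap_apply_of_ne_of_ne hkj hka,
    Equiv.swap_apply_of_ne_of_ne (mt M.f_eq_iff.1 hkb) (M.f_injective.ne hki)]

theorem forall_sameSide_of_forall_mem {S : Set (Fin (2 * n))} (hS : ∀ x, x ∈ S ∨ M.f x ∈ S)
    (h : ∀ x ∈ S, ∀ y ∈ S, SameSide x (M.f x) y (M.f y)) :
    ∀ x y, SameSide x (M.f x) y (M.f y) := by
  have left : ∀ x, ∀ y ∈ S, SameSide x (M.f x) y (M.f y) := fun x y hy => by
    rcases hS x with hx | hx
    · exact h x hx y hy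
    · simpa [M.invol, sameSide_swap] using h _ hx y hy
  intro x y
  rcases hS y with hy | hy
  · exact left x y hy
  · simpa [M.invol] using (left x _ hy).symm

end PM

section Noncrossing

variable {n : ℕ} {M : PM n} {i j x y : Fin (2 * n)}

theorem Noncrossing.mem_uIoo (hM : Noncrossing M) (hy : y ∈ Set.uIoo x (M.f x)) :
    M.f y ∈ Set.uIoo x (M.f x) := by
  wlog hx : x < M.f x generalizing x
  · have hx' : M.f x < M.f (M.f x) := by
      rw [M.invol]; exact (lt_or_gt_of_ne (M.nofix x)).resolve_right hx
    rw [Set.uIoo_comm] at hy ⊢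
    simpa [M.invol] using this (by rwa [M.invol]) hx'
  rw [Set.uIoo_of_lt hx] at hy ⊢
  obtain ⟨hxy, hyfx⟩ := hy
  have hfyfx : M.f y ≠ M.f x := M.f_injective.ne hxy.ne'
  by_contra hout
  rcases lt_or_gt_of_ne (mt M.f_eq_iff.1 hyfx.ne) with hlt | hgt
  · exact hM ⟨M.f y, x, y, M.f x, hlt, hxy, hyfx, M.invol y, rfl⟩
  · exact hM ⟨x, y, M.f x, M.f y, hxy, hyfx,
      (lt_or_gt_of_ne hfyfx).resolve_left fun h => hout ⟨hgt, h⟩, rfl, rfl⟩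

theorem noncrossing_iff_sameSide : Noncrossing M ↔ ∀ x y, SameSide x (M.f x) y (M.f y) := by
  refine ⟨fun hM x y => ⟨hM.mem_uIoo, fun h => by simpa [M.invol] using hM.mem_uIoo h⟩, ?_⟩
  rintro h ⟨a, b, c, d, hab, hbc, hcd, rfl, rfl⟩
  have hd := (h a b).1 (Set.mem_uIoo_of_lt hab hbc)
  rw [Set.uIoo_of_lt (hab.trans hbc)] at hd
  exact hcd.not_gt hd.2

theorem Noncrossing.sameSide_f_f (hM : Noncrossing M) (hij : i ⋖ j) (hxi : x ≠ i) (hxj : x ≠ j)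
    (hxa : x ≠ M.f i) (hxb : x ≠ M.f j) : SameSide x (M.f x) (M.f i) (M.f j) := by
  rw [noncrossing_iff_sameSide] at hM
  have hij' : SameSide x (M.f x) i j :=
    hij.sameSide hxi hxj (mt M.f_eq_iff.1 hxa) (mt M.f_eq_iff.1 hxb)
  exact ((hM x i).symm.trans hij').trans (hM x j)

theorem Noncrossing.uncross (hM : Noncrossing M) (hij : i ⋖ j) : Noncrossing (M.uncross i j) := by
  obtain h | h := eq_or_ne (M.f i) j
  · rwa [PM.uncross, h, Equiv.swap_self, PM.conj_refl]
  have hbi : M.f j ≠ i := fun e => h (M.f_eq_iff.1 e).symm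
  have hab : M.f i ≠ M.f j := M.f_injective.ne hij.ne
  have hgi := M.uncross_f_self hij.ne
  have hga := M.uncross_f_f hij.ne
  rw [noncrossing_iff_sameSide]
  refine (M.uncross i j).forall_sameSide_of_forall_mem (S := {x | x ≠ j ∧ x ≠ M.f j}) ?_ ?_
  · intro x
    obtain hxj | hxj := eq_or_ne x j
    · rw [hxj, (M.uncross i j).f_eq_iff.2 hgi.symm]; exact Or.inr ⟨hij.ne, hbi.symm⟩
    obtain hxb | hxb := eq_or_ne x (M.f j)
    · rw [hxb, (M.uncross i j).f_eq_iff.2 hga.symm]; exact Or.inr ⟨h, hab⟩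
    exact Or.inl ⟨hxj, hxb⟩
  rintro x ⟨hxj, hxb⟩ y ⟨hyj, hyb⟩
  obtain hxi | hxi := eq_or_ne x i
  · rw [hxi, hgi]; exact hij.chord_sameSide
  obtain rfl | hxa := eq_or_ne x (M.f i)
  · rw [hga]
    obtain hyi | hyi := eq_or_ne y i
    · rw [hyi, hgi]; exact hij.sameSide (M.nofix i) h hbi (M.nofix j)
    obtain rfl | hya := eq_or_ne y (M.f i)
    · rw [hga]; exact sameSide_endpoints
    rw [M.uncross_f_of_ne hyi hyj hya hyb]
    exact (sameSide_comm hya.symm (M.f_injective.ne hyi.symm) hyb.symm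
      (M.f_injective.ne hyj.symm)).2 (hM.sameSide_f_f hij hyi hyj hya hyb)
  rw [M.uncross_f_of_ne hxi hxj hxa hxb]
  obtain hyi | hyi := eq_or_ne y i
  · rw [hyi, hgi]; exact hij.sameSide hxi hxj (mt M.f_eq_iff.1 hxa) (mt M.f_eq_iff.1 hxb)
  obtain rfl | hya := eq_or_ne y (M.f i)
  · rw [hga]; exact hM.sameSide_f_f hij hxi hxj hxa hxb
  rw [M.uncross_f_of_ne hyi hyj hya hyb]
  exact noncrossing_iff_sameSide.1 hM x y

end Noncrossing

theorem uncross_adjacent_noncrossing_general (n : ℕ) (M : PM n) (hM : Noncrossing M)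
    (i j : Fin (2 * n)) (hij : (j : ℕ) = (i : ℕ) + 1) :
    ∃ M' : PM n, Noncrossing M' ∧ M'.f i = j ∧ M'.f (M.f i) = M.f j ∧
      ∀ k, k ≠ i → k ≠ j → k ≠ M.f i → k ≠ M.f j → M'.f k = M.f k := by
  have hcov : i ⋖ j := Fin.covBy_iff.2 (Nat.covBy_iff_add_one_eq.2 hij.symm)
  exact ⟨M.uncross i j, hM.uncross hcov, M.uncross_f_self hcov.ne, M.uncross_f_f hcov.ne,
    fun _ => M.uncross_f_of_ne⟩

theorem uncross_adjacent_noncrossing (n : ℕ) (M : PM n) (hM : Noncrossing M)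
    (i j : Fin (2 * n)) (hij : (j : ℕ) = (i : ℕ) + 1) (h : M.f i ≠ j) :
    ∃ M' : PM n, Noncrossing M' ∧ M'.f i = j ∧ M'.f (M.f i) = M.f j ∧
      ∀ k, k ≠ i → k ≠ j → k ≠ M.f i → k ≠ M.f j → M'.f k = M.f k :=
  uncross_adjacent_noncrossing_general n M hM i j hij
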